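/- arXiv:1711.09179 — 7 statements merged into one kernel-verified Lean document; each statement's English description precedes it below -/
import Mathlib

section
/- Let X_1,…,X_d (d ≥ 2, X_i ∈ ℝ^{p_i}) satisfy E|X_i| < ∞ and Assumption 1. For any vectors a_i ∈ ℝ^{p_i}, scalars c_i ∈ ℝ, and orthogonal linear maps A_i : ℝ^{p_i} → ℝ^{p_i}, one has dCov²(a_1 + c_1A_1X_1, …, a_d + c_dA_dX_d) = (∏_{i=1}^d |c_i|) · dCov²(X_1,…,X_d). Moreover, for every permutation σ of {1,…,d}, dCov²(X_{σ(1)},…,X_{σ(d)}) = dCov²(X_1,…,X_d). -/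
open MeasureTheory ProbabilityTheory Filter Finset
open scoped BigOperators RealInnerProductSpace Classical

noncomputable section

/-- `U_X(x,x') = E‖x − X‖ + E‖X − x'‖ − ‖x − x'‖ − E‖X − X'‖`. -/
def Ufn {Ω E : Type*} [MeasurableSpace Ω] [NormedAddCommGroup E]
    (μ : Measure Ω) (X X' : Ω → E) (x x' : E) : ℝ :=
  (∫ ω, ‖x - X ω‖ ∂μ) + (∫ ω, ‖X ω - x'‖ ∂μ) - ‖x - x'‖ - ∫ ω, ‖X ω - X' ω‖ ∂μ

/-- squared distance covariance of the subcollection indexed by `S`. -/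
def dCov2sub {Ω : Type*} [MeasurableSpace Ω] {d : ℕ} {E : Fin d → Type*}
    [∀ i, NormedAddCommGroup (E i)] (μ : Measure Ω)
    (X X' : (i : Fin d) → Ω → E i) (S : Finset (Fin d)) : ℝ :=
  ∫ ω, ∏ i ∈ S, Ufn μ (X i) (X' i) (X i ω) (X' i ω) ∂μ

/-- squared d-th order distance covariance. -/
def dCov2 {Ω : Type*} [MeasurableSpace Ω] {d : ℕ} {E : Fin d → Type*}
    [∀ i, NormedAddCommGroup (E i)] (μ : Measure Ω)
    (X X' : (i : Fin d) → Ω → E i) : ℝ :=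
  dCov2sub μ X X' Finset.univ

/-- squared joint distance covariance with parameter `c`. -/
def JdCov2 {Ω : Type*} [MeasurableSpace Ω] {d : ℕ} {E : Fin d → Type*}
    [∀ i, NormedAddCommGroup (E i)] (μ : Measure Ω)
    (X X' : (i : Fin d) → Ω → E i) (c : ℝ) : ℝ :=
  ∑ S ∈ Finset.univ.filter (fun S : Finset (Fin d) => 2 ≤ S.card),
    c ^ (d - S.card) * dCov2sub μ X X' S

/-- squared joint distance covariance with general coefficients `C`. -/
def JdCov2C {Ω : Type*} [MeasurableSpace Ω] {d : ℕ} {E : Fin d → Type*}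
    [∀ i, NormedAddCommGroup (E i)] (μ : Measure Ω)
    (X X' : (i : Fin d) → Ω → E i) (C : ℕ → ℝ) : ℝ :=
  ∑ S ∈ Finset.univ.filter (fun S : Finset (Fin d) => 2 ≤ S.card),
    C S.card * dCov2sub μ X X' S

/-- `(X'_1,…,X'_d)` is an independent copy of `(X_1,…,X_d)`. -/
def IsIndepCopy {Ω : Type*} [MeasurableSpace Ω] {d : ℕ} {E : Fin d → Type*}
    [∀ i, MeasurableSpace (E i)] (μ : Measure Ω)
    (X X' : (i : Fin d) → Ω → E i) : Prop :=
  IndepFun (fun ω i => X i ω) (fun ω i => X' i ω) μ ∧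
  IdentDistrib (fun ω i => X i ω) (fun ω i => X' i ω) μ μ

/-- Assumption 1. -/
def Assumption1 {Ω : Type*} [MeasurableSpace Ω] {d : ℕ} {E : Fin d → Type*}
    [∀ i, NormedAddCommGroup (E i)] (μ : Measure Ω)
    (X : (i : Fin d) → Ω → E i) : Prop :=
  ∀ S : Finset (Fin d), 2 ≤ S.card →
    ∃ S₁ S₂ : Finset (Fin d), S₁ ∪ S₂ = S ∧ Disjoint S₁ S₂ ∧
      Integrable (fun ω => ∏ i ∈ S₁, ‖X i ω‖) μ ∧
      Integrable (fun ω => ∏ i ∈ S₂, ‖X i ω‖) μ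

/-- characteristic function of a Euclidean random vector. -/
def charFn {Ω : Type*} [MeasurableSpace Ω] {p : ℕ} (μ : Measure Ω)
    (X : Ω → EuclideanSpace ℝ (Fin p)) (t : EuclideanSpace ℝ (Fin p)) : ℂ :=
  ∫ ω, Complex.exp (Complex.I * ((⟪t, X ω⟫ : ℝ) : ℂ)) ∂μ

/-- the weight `w_p(t) = (c_p ‖t‖^{1+p})⁻¹`, `c_p = π^{(1+p)/2}/Γ((1+p)/2)`. -/
def wgt (p : ℕ) {E : Type*} [NormedAddCommGroup E] (t : E) : ℝ :=
  (Real.pi ^ ((1 + (p : ℝ)) / 2) / Real.Gamma ((1 + (p : ℝ)) / 2) * ‖t‖ ^ (1 + p))⁻¹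

/-! `U_X` is built from distances only, so a similarity of ratio `r` applied to `X`, `X'` and
to both arguments multiplies it by `r`; the product of the `U`'s then scales by `∏ rᵢ`. -/

section Similarity

variable {Ω E F : Type*} [MeasurableSpace Ω] [NormedAddCommGroup E] [NormedAddCommGroup F]

theorem Ufn_comp_of_norm_sub_eq (μ : Measure Ω) (X X' : Ω → E) {f : E → F} {r : ℝ}
    (hf : ∀ x y, ‖f x - f y‖ = r * ‖x - y‖) (x x' : E) :
    Ufn μ (f ∘ X) (f ∘ X') (f x) (f x') = r * Ufn μ X X' x x' := by
  simp only [Ufn, Function.comp_apply, hf, integral_const_mul]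
  ring

theorem norm_affine_sub_affine [NormedSpace ℝ E] (a : E) (c : ℝ) (A : E ≃ₗᵢ[ℝ] E)
    (x y : E) :
    ‖(a + c • A x) - (a + c • A y)‖ = |c| * ‖x - y‖ := by
  rw [add_sub_add_left_eq_sub, ← smul_sub, ← A.map_sub, norm_smul, A.norm_map, Real.norm_eq_abs]

end Similarity

section Invariance

variable {Ω : Type*} [MeasurableSpace Ω] {d : ℕ}

theorem dCov2sub_comp_of_norm_sub_eq {E F : Fin d → Type*} [∀ i, NormedAddCommGroup (E i)]
    [∀ i, NormedAddCommGroup (F i)] (μ : Measure Ω) (X X' : (i : Fin d) → Ω → E i)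
    {f : (i : Fin d) → E i → F i} {r : Fin d → ℝ}
    (hf : ∀ i x y, ‖f i x - f i y‖ = r i * ‖x - y‖) (S : Finset (Fin d)) :
    dCov2sub μ (fun i => f i ∘ X i) (fun i => f i ∘ X' i) S =
      (∏ i ∈ S, r i) * dCov2sub μ X X' S := by
  simp only [dCov2sub, ← integral_const_mul, ← prod_mul_distrib]
  congr 1 with ω
  exact prod_congr rfl fun i _ => Ufn_comp_of_norm_sub_eq μ (X i) (X' i) (hf i) _ _

theorem dCov2_comp_perm {E : Fin d → Type*} [∀ i, NormedAddCommGroup (E i)] (μ : Measure Ω)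
    (X X' : (i : Fin d) → Ω → E i) (σ : Equiv.Perm (Fin d)) :
    dCov2 μ (fun i => X (σ i)) (fun i => X' (σ i)) = dCov2 μ X X' := by
  simp only [dCov2, dCov2sub]
  congr 1 with ω
  exact Equiv.prod_comp σ fun i => Ufn μ (X i) (X' i) (X i ω) (X' i ω)

end Invariance

theorem stmt2_general {Ω : Type*} [MeasurableSpace Ω] (μ : Measure Ω)
    {d : ℕ} {p : Fin d → ℕ}
    (X X' : (i : Fin d) → Ω → EuclideanSpace ℝ (Fin (p i)))
    (a : (i : Fin d) → EuclideanSpace ℝ (Fin (p i))) (c : Fin d → ℝ)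
    (A : (i : Fin d) → EuclideanSpace ℝ (Fin (p i)) ≃ₗᵢ[ℝ] EuclideanSpace ℝ (Fin (p i)))
    (σ : Equiv.Perm (Fin d)) :
    dCov2 μ (fun i ω => a i + c i • (A i) (X i ω)) (fun i ω => a i + c i • (A i) (X' i ω))
        = (∏ i, |c i|) * dCov2 μ X X' ∧
    dCov2 μ (fun i ω => X (σ i) ω) (fun i ω => X' (σ i) ω) = dCov2 μ X X' :=
  ⟨dCov2sub_comp_of_norm_sub_eq μ X X'
      (f := fun i x => a i + c i • A i x)
      (fun i => norm_affine_sub_affine (a i) (c i) (A i)) univ,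
    dCov2_comp_perm μ X X' σ⟩

/-- Proposition 2.1(1). Invariance of `dCov²` under translation, scaling,
orthogonal transformation, and permutation. -/
theorem stmt2 {Ω : Type*} [MeasurableSpace Ω] (μ : Measure Ω) [IsProbabilityMeasure μ]
    {d : ℕ} (hd : 2 ≤ d) {p : Fin d → ℕ}
    (X X' : (i : Fin d) → Ω → EuclideanSpace ℝ (Fin (p i)))
    (hm : ∀ i, Measurable (X i)) (hint : ∀ i, Integrable (X i) μ)
    (hA : Assumption1 μ X) (hcopy : IsIndepCopy μ X X')
    (a : (i : Fin d) → EuclideanSpace ℝ (Fin (p i))) (c : Fin d → ℝ)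
    (A : (i : Fin d) → EuclideanSpace ℝ (Fin (p i)) ≃ₗᵢ[ℝ] EuclideanSpace ℝ (Fin (p i)))
    (σ : Equiv.Perm (Fin d)) :
    dCov2 μ (fun i ω => a i + c i • (A i) (X i ω)) (fun i ω => a i + c i • (A i) (X' i ω))
        = (∏ i, |c i|) * dCov2 μ X X' ∧
    dCov2 μ (fun i ω => X (σ i) ω) (fun i ω => X' (σ i) ω) = dCov2 μ X X' :=
  stmt2_general μ X X' a c A σ
end
end

section
/- Let X_1,…,X_d (d ≥ 2, X_i ∈ ℝ^{p_i}) satisfy E|X_i| < ∞ and Assumption 1, and let (X_1',…,X_d') be an independent copy of (X_1,…,X_d). Then for every c ≥ 0, JdCov²(X_1,…,X_d; c) = E[∏_{i=1}^d (U_{X_i}(X_i, X_i') + c)] − c^d. In particular, for d = 2 and any c ≥ 0, JdCov²(X_1,X_2;c) = E[U_{X_1}(X_1,X_1')·U_{X_2}(X_2,X_2')] = dCov²(X_1,X_2). -/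
open MeasureTheory ProbabilityTheory Filter Finset
open scoped BigOperators RealInnerProductSpace Classical

noncomputable section

/-!
Expanding the product gives `∏ᵢ (Uᵢ + c) = ∑_S c^(d-|S|) ∏_{i∈S} Uᵢ`. After integration the empty
set contributes `c^d` and every singleton contributes `0`, because `U_X` is doubly centred:
by independence and Fubini, `E‖X - X'‖ = E[a(X)] = E[a(X')]` for `a(x) = E‖x - X‖`, and
`U_X(x, x') = a(x) + a(x') - ‖x - x'‖ - E‖X - X'‖`.

Integrating term by term needs every `∏_{i∈S} Uᵢ` to be integrable. Since `a` is 1-Lipschitz,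
`|U_X(x, x')| ≤ 2 (min(‖x‖, ‖x'‖) + E‖X‖ + E‖X'‖)`, and for the split `S = S₁ ∪ S₂` of
Assumption 1 the product of the minima is dominated by `∏_{S₁} ‖Xᵢ‖ · ∏_{S₂} ‖X'ᵢ‖`, a product
of two independent integrable variables.
-/

def meanDist {Ω E : Type*} [MeasurableSpace Ω] [NormedAddCommGroup E]
    (μ : Measure Ω) (X : Ω → E) (x : E) : ℝ :=
  ∫ ω, ‖x - X ω‖ ∂μ

section SingleVariable

variable {Ω E : Type*} [MeasurableSpace Ω] {μ : Measure Ω} [NormedAddCommGroup E]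
  {X X' : Ω → E}

lemma Ufn_eq_meanDist (x x' : E) :
    Ufn μ X X' x x' = meanDist μ X x + meanDist μ X x' - ‖x - x'‖ - ∫ ω, ‖X ω - X' ω‖ ∂μ := by
  simp only [Ufn, meanDist, norm_sub_rev (X _) x']

lemma meanDist_nonneg (x : E) : 0 ≤ meanDist μ X x :=
  integral_nonneg fun _ => norm_nonneg _

lemma integral_norm_sub_le (hX : Integrable X μ) (hX' : Integrable X' μ) :
    ∫ ω, ‖X ω - X' ω‖ ∂μ ≤ (∫ ω, ‖X ω‖ ∂μ) + ∫ ω, ‖X' ω‖ ∂μ := by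
  rw [← integral_add hX.norm hX'.norm]
  exact integral_mono (hX.sub hX').norm (hX.norm.add hX'.norm) fun ω => norm_sub_le _ _

variable [IsProbabilityMeasure μ]

lemma integrable_norm_sub_const (hX : Integrable X μ) (x : E) :
    Integrable (fun ω => ‖x - X ω‖) μ :=
  ((integrable_const x).sub hX).norm

lemma meanDist_le_add_norm_sub (hX : Integrable X μ) (x y : E) :
    meanDist μ X x ≤ meanDist μ X y + ‖x - y‖ := by
  have h := integral_mono (integrable_norm_sub_const hX x)
    ((integrable_norm_sub_const hX y).add (integrable_const ‖x - y‖))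
    fun ω => norm_sub_le_norm_sub_add_norm_sub x y (X ω) |>.trans_eq (add_comm _ _)
  simpa [meanDist, integral_add (integrable_norm_sub_const hX y) (integrable_const _)] using h

lemma meanDist_le_norm_add (hX : Integrable X μ) (x : E) :
    meanDist μ X x ≤ ‖x‖ + ∫ ω, ‖X ω‖ ∂μ := by
  have h := integral_mono (integrable_norm_sub_const hX x)
    ((integrable_const ‖x‖).add hX.norm) fun ω => norm_sub_le x (X ω)
  simpa [meanDist, integral_add (integrable_const _) hX.norm] using h

lemma norm_sub_le_meanDist_add (hX : Integrable X μ) (x x' : E) :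
    ‖x - x'‖ ≤ meanDist μ X x + meanDist μ X x' := by
  have h := integral_mono (integrable_const ‖x - x'‖)
    ((integrable_norm_sub_const hX x).add (integrable_norm_sub_const hX x'))
    fun ω => by simpa [norm_sub_rev (X ω) x'] using norm_sub_le_norm_sub_add_norm_sub x (X ω) x'
  simpa [meanDist, integral_add (integrable_norm_sub_const hX x)
    (integrable_norm_sub_const hX x')] using h

lemma lipschitzWith_meanDist (hX : Integrable X μ) : LipschitzWith 1 (meanDist μ X) :=
  LipschitzWith.of_le_add fun x y => by
    simpa [dist_eq_norm] using meanDist_le_add_norm_sub hX x y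

lemma abs_Ufn_le (hX : Integrable X μ) (hX' : Integrable X' μ) (x x' : E) :
    |Ufn μ X X' x x'| ≤ 2 * (min ‖x‖ ‖x'‖ + ((∫ ω, ‖X ω‖ ∂μ) + ∫ ω, ‖X' ω‖ ∂μ)) := by
  have hD0 : 0 ≤ ∫ ω, ‖X ω - X' ω‖ ∂μ := integral_nonneg fun _ => norm_nonneg _
  have hM' : 0 ≤ ∫ ω, ‖X' ω‖ ∂μ := integral_nonneg fun _ => norm_nonneg _
  have hDM := integral_norm_sub_le hX hX'
  have h₁ := meanDist_le_add_norm_sub hX x x'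
  have h₂ := meanDist_le_add_norm_sub hX x' x
  have h₃ := meanDist_le_norm_add hX x
  have h₄ := meanDist_le_norm_add hX x'
  have h₅ := norm_sub_le_meanDist_add hX x x'
  rw [norm_sub_rev x' x] at h₂
  rw [Ufn_eq_meanDist, abs_le]
  constructor
  · have := le_min (norm_nonneg x) (norm_nonneg x')
    linarith
  · rcases min_cases ‖x‖ ‖x'‖ with ⟨hmin, -⟩ | ⟨hmin, -⟩ <;> rw [hmin] <;> linarith

lemma continuous_meanDist (hX : Integrable X μ) : Continuous (meanDist μ X) :=
  (lipschitzWith_meanDist hX).continuous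

lemma integrable_meanDist_comp (hX : Integrable X μ) (hX' : Integrable X' μ) :
    Integrable (fun ω => meanDist μ X (X' ω)) μ := by
  refine (hX'.norm.add (integrable_const (∫ ω, ‖X ω‖ ∂μ))).mono'
    ((continuous_meanDist hX).comp_aestronglyMeasurable hX'.aestronglyMeasurable) ?_
  filter_upwards with ω
  rw [Real.norm_of_nonneg (meanDist_nonneg _)]
  exact meanDist_le_norm_add hX (X' ω)

lemma continuous_Ufn (hX : Integrable X μ) :
    Continuous fun p : E × E => Ufn μ X X' p.1 p.2 := by
  simp_rw [Ufn_eq_meanDist]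
  have := continuous_meanDist hX
  fun_prop

end SingleVariable

section Independence

variable {Ω E : Type*} [MeasurableSpace Ω] {μ : Measure Ω} [IsProbabilityMeasure μ]
  [NormedAddCommGroup E] [MeasurableSpace E] [BorelSpace E] [SecondCountableTopology E]
  {X Y : Ω → E}

lemma ProbabilityTheory.IndepFun.integral_norm_sub (hXY : IndepFun X Y μ) (hX : Integrable X μ)
    (hY : Integrable Y μ) :
    ∫ ω, ‖X ω - Y ω‖ ∂μ = ∫ ω, meanDist μ Y (X ω) ∂μ := by
  have hXm := hX.aemeasurable
  have hYm := hY.aemeasurable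
  have hlaw : μ.map (fun ω => (X ω, Y ω)) = (μ.map X).prod (μ.map Y) :=
    (indepFun_iff_map_prod_eq_prod_map_map hXm hYm).1 hXY
  have hf : Continuous fun p : E × E => ‖p.1 - p.2‖ := by fun_prop
  have hfint : Integrable (fun p : E × E => ‖p.1 - p.2‖) ((μ.map X).prod (μ.map Y)) := by
    rw [← hlaw, integrable_map_measure hf.aestronglyMeasurable (hXm.prodMk hYm)]
    exact (hX.sub hY).norm
  have hinner : ∀ x, ∫ y, ‖x - y‖ ∂μ.map Y = meanDist μ Y x := fun x =>
    integral_map hYm (by fun_prop : Continuous fun y : E => ‖x - y‖).aestronglyMeasurable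
  calc ∫ ω, ‖X ω - Y ω‖ ∂μ = ∫ p, ‖p.1 - p.2‖ ∂(μ.map X).prod (μ.map Y) := by
        rw [← hlaw, integral_map (hXm.prodMk hYm) hf.aestronglyMeasurable]
    _ = ∫ x, meanDist μ Y x ∂μ.map X := by
        simp_rw [integral_prod _ hfint, hinner]
    _ = ∫ ω, meanDist μ Y (X ω) ∂μ :=
        integral_map hXm (continuous_meanDist hY).aestronglyMeasurable

omit [IsProbabilityMeasure μ] in
lemma ProbabilityTheory.IdentDistrib.meanDist_eq (hXY : IdentDistrib X Y μ μ) :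
    meanDist μ X = meanDist μ Y :=
  funext fun _ => (hXY.comp (measurable_const.sub measurable_id).norm).integral_eq

lemma integral_Ufn_eq_zero (hXY : IndepFun X Y μ) (hid : IdentDistrib X Y μ μ)
    (hX : Integrable X μ) :
    ∫ ω, Ufn μ X Y (X ω) (Y ω) ∂μ = 0 := by
  have hY : Integrable Y μ := hid.integrable_iff.1 hX
  have haX := integrable_meanDist_comp hX hX
  have haY := integrable_meanDist_comp hX hY
  have hD : Integrable (fun ω => ‖X ω - Y ω‖) μ := (hX.sub hY).norm
  have hsym : ∫ ω, meanDist μ X (Y ω) ∂μ = ∫ ω, meanDist μ X (X ω) ∂μ :=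
    (hid.comp (continuous_meanDist hX).measurable).integral_eq.symm
  have hpair : ∫ ω, ‖X ω - Y ω‖ ∂μ = ∫ ω, meanDist μ X (X ω) ∂μ := by
    rw [hXY.integral_norm_sub hX hY, hid.meanDist_eq]
  have haXY : Integrable (fun ω => meanDist μ X (X ω) + meanDist μ X (Y ω)) μ := haX.add haY
  have hU : Integrable (fun ω => meanDist μ X (X ω) + meanDist μ X (Y ω) - ‖X ω - Y ω‖) μ :=
    haXY.sub hD
  simp_rw [Ufn_eq_meanDist]
  rw [integral_sub hU (integrable_const _), integral_sub haXY hD, integral_add haX haY,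
    integral_const, hsym, hpair]
  simp

end Independence

section ProductExpansion

variable {Ω ι : Type*} [MeasurableSpace Ω] {μ : Measure Ω} {s : Finset ι} {f : ι → Ω → ℝ}

lemma integrable_prod_add_const (hf : ∀ t ⊆ s, Integrable (fun ω => ∏ i ∈ t, f i ω) μ)
    (b : ι → ℝ) : Integrable (fun ω => ∏ i ∈ s, (f i ω + b i)) μ := by
  simp_rw [Finset.prod_add]
  exact integrable_finsetSum _ fun t ht => (hf t (mem_powerset.1 ht)).mul_const _

lemma integral_prod_add_const (hf : ∀ t ⊆ s, Integrable (fun ω => ∏ i ∈ t, f i ω) μ) (c : ℝ) :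
    ∫ ω, ∏ i ∈ s, (f i ω + c) ∂μ = ∑ t ∈ s.powerset, c ^ (#s - #t) * ∫ ω, ∏ i ∈ t, f i ω ∂μ := by
  simp_rw [Finset.prod_add, prod_const]
  rw [integral_finsetSum _ fun t ht => (hf t (mem_powerset.1 ht)).mul_const _]
  refine sum_congr rfl fun t ht => ?_
  rw [integral_mul_const, mul_comm, card_sdiff_of_subset (mem_powerset.1 ht)]

end ProductExpansion

section Family

variable {Ω : Type*} [MeasurableSpace Ω] {μ : Measure Ω} {d : ℕ} {E : Fin d → Type*}
  {X X' : (i : Fin d) → Ω → E i}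

lemma IsIndepCopy.indepFun [∀ i, MeasurableSpace (E i)] (h : IsIndepCopy μ X X') (i : Fin d) :
    IndepFun (X i) (X' i) μ :=
  h.1.comp (measurable_pi_apply i) (measurable_pi_apply i)

lemma IsIndepCopy.identDistrib [∀ i, MeasurableSpace (E i)] (h : IsIndepCopy μ X X')
    (i : Fin d) : IdentDistrib (X i) (X' i) μ μ :=
  h.2.comp (measurable_pi_apply i)

variable [∀ i, NormedAddCommGroup (E i)]

lemma Assumption1.exists_split [IsFiniteMeasure μ] (hA : Assumption1 μ X)
    (hX : ∀ i, Integrable (X i) μ) (T : Finset (Fin d)) :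
    ∃ T₁ T₂ : Finset (Fin d), T₁ ∪ T₂ = T ∧ Disjoint T₁ T₂ ∧
      Integrable (fun ω => ∏ i ∈ T₁, ‖X i ω‖) μ ∧ Integrable (fun ω => ∏ i ∈ T₂, ‖X i ω‖) μ := by
  by_cases hT : 2 ≤ #T
  · exact hA T hT
  refine ⟨T, ∅, union_empty T, disjoint_empty_right T, ?_, by simp⟩
  rcases Nat.le_one_iff_eq_zero_or_eq_one.1 (Nat.le_of_lt_succ (not_le.1 hT)) with h0 | h1
  · simp [card_eq_zero.1 h0]
  · obtain ⟨i, rfl⟩ := card_eq_one.1 h1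
    simpa using (hX i).norm

lemma dCov2sub_empty [IsProbabilityMeasure μ] : dCov2sub μ X X' ∅ = 1 := by
  simp [dCov2sub]

lemma JdCov2_add_pow [IsProbabilityMeasure μ] (hsingle : ∀ i, dCov2sub μ X X' {i} = 0)
    (c : ℝ) :
    JdCov2 μ X X' c + c ^ d = ∑ T : Finset (Fin d), c ^ (d - #T) * dCov2sub μ X X' T := by
  rw [← sum_filter_add_sum_filter_not univ (fun T : Finset (Fin d) => 2 ≤ #T), JdCov2]
  congr 1
  rw [sum_eq_single_of_mem ∅ (by simp), card_empty, dCov2sub_empty, Nat.sub_zero, mul_one]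
  intro T hT hne
  have hpos := card_pos.2 (nonempty_iff_ne_empty.2 hne)
  have hlt := (mem_filter.1 hT).2
  obtain ⟨i, rfl⟩ := card_eq_one.1 (show #T = 1 by omega)
  rw [hsingle, mul_zero]

variable [∀ i, MeasurableSpace (E i)] [∀ i, BorelSpace (E i)]

/-- Bound the minimum by `‖Xᵢ‖` on `T₁` and by `‖X'ᵢ‖` on `T₂`, where `T = T₁ ∪ T₂` is the split
of Assumption 1: the two resulting products are independent. -/
lemma integrable_prod_min_norm [IsFiniteMeasure μ] (hA : Assumption1 μ X)
    (hX : ∀ i, Integrable (X i) μ) (hcopy : IsIndepCopy μ X X') (T : Finset (Fin d)) :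
    Integrable (fun ω => ∏ i ∈ T, min ‖X i ω‖ ‖X' i ω‖) μ := by
  obtain ⟨T₁, T₂, rfl, hdisj, hI₁, hI₂⟩ := hA.exists_split hX T
  have hφ : ∀ S : Finset (Fin d), Measurable fun v : (i : Fin d) → E i => ∏ i ∈ S, ‖v i‖ :=
    fun S => Finset.measurable_prod _ fun i _ => (measurable_pi_apply i).norm
  have hI₂' : Integrable (fun ω => ∏ i ∈ T₂, ‖X' i ω‖) μ :=
    (hcopy.2.comp (hφ T₂)).integrable_iff.1 hI₂
  have hmeas : AEStronglyMeasurable (fun ω => ∏ i ∈ T₁ ∪ T₂, min ‖X i ω‖ ‖X' i ω‖) μ :=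
    Finset.aestronglyMeasurable_fun_prod _ fun i _ =>
      (hX i).norm.aestronglyMeasurable.inf
        ((hcopy.identDistrib i).integrable_iff.1 (hX i)).norm.aestronglyMeasurable
  refine (((hcopy.1.comp (hφ T₁) (hφ T₂)).integrable_mul hI₁ hI₂').mono' hmeas ?_)
  filter_upwards with ω
  have hmin : ∀ i, 0 ≤ min ‖X i ω‖ ‖X' i ω‖ := fun i => le_min (norm_nonneg _) (norm_nonneg _)
  rw [Real.norm_of_nonneg (prod_nonneg fun i _ => hmin i), prod_union hdisj]
  exact mul_le_mul (prod_le_prod (fun i _ => hmin i) fun i _ => min_le_left _ _)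
    (prod_le_prod (fun i _ => hmin i) fun i _ => min_le_right _ _)
    (prod_nonneg fun i _ => hmin i) (prod_nonneg fun i _ => norm_nonneg _)

lemma integrable_prod_Ufn [IsProbabilityMeasure μ] (hA : Assumption1 μ X)
    (hX : ∀ i, Integrable (X i) μ) (hcopy : IsIndepCopy μ X X') (T : Finset (Fin d)) :
    Integrable (fun ω => ∏ i ∈ T, Ufn μ (X i) (X' i) (X i ω) (X' i ω)) μ := by
  have hX' : ∀ i, Integrable (X' i) μ := fun i => (hcopy.identDistrib i).integrable_iff.1 (hX i)
  set K : Fin d → ℝ := fun i => (∫ ω, ‖X i ω‖ ∂μ) + ∫ ω, ‖X' i ω‖ ∂μ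
  have hbound := (integrable_prod_add_const (s := T)
    (fun t _ => integrable_prod_min_norm hA hX hcopy t) K).const_mul (2 ^ #T)
  have hmeas : AEStronglyMeasurable
      (fun ω => ∏ i ∈ T, Ufn μ (X i) (X' i) (X i ω) (X' i ω)) μ :=
    Finset.aestronglyMeasurable_fun_prod _ fun i _ =>
      (continuous_Ufn (hX i)).comp_aestronglyMeasurable
        ((hX i).aestronglyMeasurable.prodMk (hX' i).aestronglyMeasurable)
  refine hbound.mono' hmeas (Eventually.of_forall fun ω => ?_)
  rw [Real.norm_eq_abs, abs_prod, pow_card_mul_prod]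
  exact prod_le_prod (fun i _ => abs_nonneg _)
    fun i _ => abs_Ufn_le (hX i) (hX' i) (X i ω) (X' i ω)

end Family

lemma JdCov2_fin_two {Ω : Type*} [MeasurableSpace Ω] {μ : Measure Ω} {E : Fin 2 → Type*}
    [∀ i, NormedAddCommGroup (E i)] (X X' : (i : Fin 2) → Ω → E i) (c : ℝ) :
    JdCov2 μ X X' c = dCov2 μ X X' := by
  have hfilter : univ.filter (fun S : Finset (Fin 2) => 2 ≤ #S) = {univ} := by
    ext S
    simp only [mem_filter, mem_univ, true_and, mem_singleton, ← card_eq_iff_eq_univ,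
      Fintype.card_fin]
    have := card_le_univ S
    simp only [Fintype.card_fin] at this
    omega
  simp [JdCov2, hfilter, dCov2]

theorem stmt5_general {Ω : Type*} [MeasurableSpace Ω] (μ : Measure Ω) [IsProbabilityMeasure μ]
    {d : ℕ} {p : Fin d → ℕ}
    (X X' : (i : Fin d) → Ω → EuclideanSpace ℝ (Fin (p i)))
    (hint : ∀ i, Integrable (X i) μ)
    (hA : Assumption1 μ X) (hcopy : IsIndepCopy μ X X')
    (c : ℝ) :
    JdCov2 μ X X' c
        = (∫ ω, ∏ i, (Ufn μ (X i) (X' i) (X i ω) (X' i ω) + c) ∂μ) - c ^ d ∧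
    (d = 2 → JdCov2 μ X X' c
        = ∫ ω, ∏ i, Ufn μ (X i) (X' i) (X i ω) (X' i ω) ∂μ ∧
      JdCov2 μ X X' c = dCov2 μ X X') := by
  refine ⟨?_, fun hd => ?_⟩
  · have hsingle : ∀ i, dCov2sub μ X X' {i} = 0 := fun i => by
      simpa [dCov2sub] using
        integral_Ufn_eq_zero (hcopy.indepFun i) (hcopy.identDistrib i) (hint i)
    rw [integral_prod_add_const (fun T _ => integrable_prod_Ufn hA hint hcopy T),
      powerset_univ, card_univ, Fintype.card_fin, eq_sub_iff_add_eq]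
    exact JdCov2_add_pow hsingle c
  · subst hd
    exact ⟨JdCov2_fin_two X X' c, JdCov2_fin_two X X' c⟩

/-- Proposition 2. For every `c ≥ 0`,
`JdCov²(X₁,…,X_d; c) = E[∏ᵢ (U_{Xᵢ}(Xᵢ,Xᵢ') + c)] − c^d`; in particular for `d = 2`,
`JdCov²(X₁,X₂;c) = E[U₁U₂] = dCov²(X₁,X₂)`. -/
theorem stmt5 {Ω : Type*} [MeasurableSpace Ω] (μ : Measure Ω) [IsProbabilityMeasure μ]
    {d : ℕ} (hd : 2 ≤ d) {p : Fin d → ℕ}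
    (X X' : (i : Fin d) → Ω → EuclideanSpace ℝ (Fin (p i)))
    (hm : ∀ i, Measurable (X i)) (hint : ∀ i, Integrable (X i) μ)
    (hA : Assumption1 μ X) (hcopy : IsIndepCopy μ X X')
    (c : ℝ) (hc : 0 ≤ c) :
    JdCov2 μ X X' c
        = (∫ ω, ∏ i, (Ufn μ (X i) (X' i) (X i ω) (X' i ω) + c) ∂μ) - c ^ d ∧
    (d = 2 → JdCov2 μ X X' c
        = ∫ ω, ∏ i, Ufn μ (X i) (X' i) (X i ω) (X' i ω) ∂μ ∧
      JdCov2 μ X X' c = dCov2 μ X X') :=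
  stmt5_general μ X X' hint hA hcopy c
end
end

section
/- Let X_1,…,X_d (d ≥ 2, X_i ∈ ℝ^{p_i}) satisfy E|X_i| < ∞ and Assumption 1. For any vectors a_i ∈ ℝ^{p_i}, any scalar c_0 ∈ ℝ, any orthogonal linear maps A_i : ℝ^{p_i} → ℝ^{p_i}, and any c ≥ 0: JdCov²(a_1 + c_0A_1X_1, …, a_d + c_0A_dX_d; |c_0|·c) = |c_0|^d · JdCov²(X_1,…,X_d; c). Moreover, for every permutation σ of {1,…,d}, JdCov²(X_{σ(1)},…,X_{σ(d)}; c) = JdCov²(X_1,…,X_d; c). -/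
open MeasureTheory ProbabilityTheory Filter Finset
open scoped BigOperators RealInnerProductSpace Classical

noncomputable section

/-! `x ↦ a + c₀ • A x` multiplies all distances by `|c₀|`, so each factor `U_{X_i}` scales by
`|c₀|`, the distance covariance of a subcollection `S` by `|c₀| ^ |S|`, and the weight
`(|c₀| c) ^ (d - |S|)` supplies the missing power of `|c₀|`. Permuting the variables only
reindexes the subcollections. -/

section Scaling

variable {Ω : Type*} [MeasurableSpace Ω] (μ : Measure Ω)

lemma Ufn_comp_of_norm_sub_eq_mul {E F : Type*} [NormedAddCommGroup E] [NormedAddCommGroup F]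
    {f : E → F} {k : ℝ} (hf : ∀ y z, ‖f y - f z‖ = k * ‖y - z‖) (X X' : Ω → E) (x x' : E) :
    Ufn μ (fun ω => f (X ω)) (fun ω => f (X' ω)) (f x) (f x') = k * Ufn μ X X' x x' := by
  simp only [Ufn, hf, integral_const_mul]
  ring

variable {d : ℕ} {E F : Fin d → Type*} [∀ i, NormedAddCommGroup (E i)]
  [∀ i, NormedAddCommGroup (F i)] {f : ∀ i, E i → F i} {k : ℝ}

lemma dCov2sub_comp_of_norm_sub_eq_mul (hf : ∀ i y z, ‖f i y - f i z‖ = k * ‖y - z‖)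
    (X X' : (i : Fin d) → Ω → E i) (S : Finset (Fin d)) :
    dCov2sub μ (fun i ω => f i (X i ω)) (fun i ω => f i (X' i ω)) S
      = k ^ S.card * dCov2sub μ X X' S := by
  simp only [dCov2sub, Ufn_comp_of_norm_sub_eq_mul μ (hf _), prod_mul_distrib, prod_const,
    integral_const_mul]

lemma JdCov2_comp_of_norm_sub_eq_mul (hf : ∀ i y z, ‖f i y - f i z‖ = k * ‖y - z‖)
    (X X' : (i : Fin d) → Ω → E i) (c : ℝ) :
    JdCov2 μ (fun i ω => f i (X i ω)) (fun i ω => f i (X' i ω)) (k * c)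
      = k ^ d * JdCov2 μ X X' c := by
  rw [JdCov2, JdCov2, mul_sum]
  refine sum_congr rfl fun S _ => ?_
  have hS : S.card ≤ d := by simpa using card_le_univ S
  have hk : k ^ d = k ^ (d - S.card) * k ^ S.card := by rw [← pow_add, Nat.sub_add_cancel hS]
  rw [dCov2sub_comp_of_norm_sub_eq_mul μ hf, mul_pow, hk]
  ring

end Scaling

lemma norm_affine_isometry_sub {E : Type*} [NormedAddCommGroup E] [NormedSpace ℝ E]
    (a : E) (c₀ : ℝ) (A : E ≃ₗᵢ[ℝ] E) (y z : E) :
    ‖(a + c₀ • A y) - (a + c₀ • A z)‖ = |c₀| * ‖y - z‖ := by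
  rw [add_sub_add_left_eq_sub, ← smul_sub, ← map_sub, norm_smul, A.norm_map, Real.norm_eq_abs]

section Permutation

variable {Ω : Type*} [MeasurableSpace Ω] (μ : Measure Ω) {d : ℕ} {E : Fin d → Type*}
  [∀ i, NormedAddCommGroup (E i)] (X X' : (i : Fin d) → Ω → E i) (σ : Equiv.Perm (Fin d))

lemma dCov2sub_perm (S : Finset (Fin d)) :
    dCov2sub μ (fun i ω => X (σ i) ω) (fun i ω => X' (σ i) ω) S
      = dCov2sub μ X X' (σ.finsetCongr S) := by
  simp only [dCov2sub, Equiv.finsetCongr_apply, prod_map, Equiv.coe_toEmbedding]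

lemma JdCov2_perm (c : ℝ) :
    JdCov2 μ (fun i ω => X (σ i) ω) (fun i ω => X' (σ i) ω) c = JdCov2 μ X X' c := by
  refine sum_equiv σ.finsetCongr (fun S => ?_) fun S _ => ?_
  · simp
  · rw [dCov2sub_perm, Equiv.finsetCongr_apply, card_map]

end Permutation

theorem stmt8_general {Ω : Type*} [MeasurableSpace Ω] (μ : Measure Ω)
    {d : ℕ} {p : Fin d → ℕ}
    (X X' : (i : Fin d) → Ω → EuclideanSpace ℝ (Fin (p i)))
    (a : (i : Fin d) → EuclideanSpace ℝ (Fin (p i))) (c₀ : ℝ)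
    (A : (i : Fin d) → EuclideanSpace ℝ (Fin (p i)) ≃ₗᵢ[ℝ] EuclideanSpace ℝ (Fin (p i)))
    (c : ℝ) (σ : Equiv.Perm (Fin d)) :
    JdCov2 μ (fun i ω => a i + c₀ • (A i) (X i ω)) (fun i ω => a i + c₀ • (A i) (X' i ω))
        (|c₀| * c) = |c₀| ^ d * JdCov2 μ X X' c ∧
    JdCov2 μ (fun i ω => X (σ i) ω) (fun i ω => X' (σ i) ω) c = JdCov2 μ X X' c :=
  ⟨JdCov2_comp_of_norm_sub_eq_mul μ
      (fun i => norm_affine_isometry_sub (a i) c₀ (A i)) X X' c,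
    JdCov2_perm μ X X' σ c⟩

/-- Proposition 3(1). Invariance of `JdCov²` under translation, common
scaling, orthogonal transformation, and permutation. -/
theorem stmt8 {Ω : Type*} [MeasurableSpace Ω] (μ : Measure Ω) [IsProbabilityMeasure μ]
    {d : ℕ} (hd : 2 ≤ d) {p : Fin d → ℕ}
    (X X' : (i : Fin d) → Ω → EuclideanSpace ℝ (Fin (p i)))
    (hm : ∀ i, Measurable (X i)) (hint : ∀ i, Integrable (X i) μ)
    (hA : Assumption1 μ X) (hcopy : IsIndepCopy μ X X')
    (a : (i : Fin d) → EuclideanSpace ℝ (Fin (p i))) (c₀ : ℝ)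
    (A : (i : Fin d) → EuclideanSpace ℝ (Fin (p i)) ≃ₗᵢ[ℝ] EuclideanSpace ℝ (Fin (p i)))
    (c : ℝ) (hc : 0 ≤ c) (σ : Equiv.Perm (Fin d)) :
    JdCov2 μ (fun i ω => a i + c₀ • (A i) (X i ω)) (fun i ω => a i + c₀ • (A i) (X' i ω))
        (|c₀| * c) = |c₀| ^ d * JdCov2 μ X X' c ∧
    JdCov2 μ (fun i ω => X (σ i) ω) (fun i ω => X' (σ i) ω) c = JdCov2 μ X X' c :=
  stmt8_general μ X X' a c₀ A c σ
end
end

section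
/- Let X_1,…,X_d (d ≥ 2, X_i ∈ ℝ^{p_i}) satisfy E|X_i| < ∞ and Assumption 1, let (X_1',…,X_d') be an independent copy of (X_1,…,X_d), and suppose dCov(X_i) := (E[U_{X_i}(X_i,X_i')²])^{1/2} > 0 for every i. Define JdCov_S²(X_1,…,X_d; c) = E[∏_{i=1}^d (U_{X_i}(X_i,X_i')/dCov(X_i) + c)] − c^d for c ≥ 0. Then for any vectors a_i ∈ ℝ^{p_i}, nonzero scalars c_i ∈ ℝ, orthogonal linear maps A_i : ℝ^{p_i} → ℝ^{p_i}, and any c ≥ 0: JdCov_S²(a_1 + c_1A_1X_1, …, a_d + c_dA_dX_d; c) = JdCov_S²(X_1,…,X_d; c). -/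
open MeasureTheory ProbabilityTheory Filter Finset
open scoped BigOperators RealInnerProductSpace Classical

noncomputable section

/-- the distance variance `dCov(X) = (E[U_X(X,X')²])^{1/2}`. -/
def dVar {Ω E : Type*} [MeasurableSpace Ω] [NormedAddCommGroup E]
    (μ : Measure Ω) (X X' : Ω → E) : ℝ :=
  Real.sqrt (∫ ω, (Ufn μ X X' (X ω) (X' ω)) ^ 2 ∂μ)

/-- the scale-invariant squared joint distance covariance `JdCov_S²(X₁,…,X_d; c)`. -/
def JdCov2Scale {Ω : Type*} [MeasurableSpace Ω] {d : ℕ} {E : Fin d → Type*}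
    [∀ i, NormedAddCommGroup (E i)] (μ : Measure Ω)
    (X X' : (i : Fin d) → Ω → E i) (c : ℝ) : ℝ :=
  (∫ ω, ∏ i, (Ufn μ (X i) (X' i) (X i ω) (X' i ω) / dVar μ (X i) (X' i) + c) ∂μ) - c ^ d

/-! Each `U_{X_i}` is built from distances only, so a map multiplying all distances by `r > 0`
multiplies `U_{X_i}` and `dCov(X_i)` by the same `r`, and the normalised quotient
`U_{X_i} / dCov(X_i)` is unchanged pointwise. -/

section Similarity

variable {Ω E F : Type*} [MeasurableSpace Ω] [NormedAddCommGroup E] [NormedAddCommGroup F]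
  (μ : Measure Ω) (X X' : Ω → E) {f : E → F} {r : ℝ}

lemma Ufn_comp_of_norm_sub (hf : ∀ x y, ‖f x - f y‖ = r * ‖x - y‖) (x x' : E) :
    Ufn μ (f ∘ X) (f ∘ X') (f x) (f x') = r * Ufn μ X X' x x' := by
  simp only [Ufn, Function.comp_apply, hf, integral_const_mul]
  ring

lemma dVar_comp_of_norm_sub (hf : ∀ x y, ‖f x - f y‖ = r * ‖x - y‖) (hr : 0 ≤ r) :
    dVar μ (f ∘ X) (f ∘ X') = r * dVar μ X X' := by
  have hsq : ∀ ω, Ufn μ (f ∘ X) (f ∘ X') (f (X ω)) (f (X' ω)) ^ 2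
      = r ^ 2 * Ufn μ X X' (X ω) (X' ω) ^ 2 := fun ω => by
    rw [Ufn_comp_of_norm_sub μ X X' hf, mul_pow]
  simp only [dVar, Function.comp_apply, hsq, integral_const_mul]
  rw [Real.sqrt_mul (sq_nonneg r), Real.sqrt_sq hr]

lemma Ufn_div_dVar_comp_of_norm_sub (hf : ∀ x y, ‖f x - f y‖ = r * ‖x - y‖) (hr : 0 < r)
    (x x' : E) :
    Ufn μ (f ∘ X) (f ∘ X') (f x) (f x') / dVar μ (f ∘ X) (f ∘ X')
      = Ufn μ X X' x x' / dVar μ X X' := by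
  rw [Ufn_comp_of_norm_sub μ X X' hf, dVar_comp_of_norm_sub μ X X' hf hr.le,
    mul_div_mul_left _ _ hr.ne']

end Similarity

lemma JdCov2Scale_comp_of_norm_sub {Ω : Type*} [MeasurableSpace Ω] {d : ℕ}
    {E F : Fin d → Type*} [∀ i, NormedAddCommGroup (E i)] [∀ i, NormedAddCommGroup (F i)]
    (μ : Measure Ω) (X X' : (i : Fin d) → Ω → E i) (f : (i : Fin d) → E i → F i)
    (r : Fin d → ℝ) (hf : ∀ i x y, ‖f i x - f i y‖ = r i * ‖x - y‖) (hr : ∀ i, 0 < r i)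
    (c : ℝ) :
    JdCov2Scale μ (fun i => f i ∘ X i) (fun i => f i ∘ X' i) c = JdCov2Scale μ X X' c := by
  simp only [JdCov2Scale]
  congr 2 with ω
  refine Finset.prod_congr rfl fun i _ => ?_
  rw [Function.comp_apply, Function.comp_apply,
    Ufn_div_dVar_comp_of_norm_sub μ (X i) (X' i) (hf i) (hr i)]

lemma norm_add_smul_map_sub {E : Type*} [NormedAddCommGroup E] [NormedSpace ℝ E]
    (a : E) (c : ℝ) (A : E ≃ₗᵢ[ℝ] E) (x y : E) :
    ‖(a + c • A x) - (a + c • A y)‖ = |c| * ‖x - y‖ := by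
  rw [add_sub_add_left_eq_sub, ← smul_sub, norm_smul, ← map_sub, A.norm_map, Real.norm_eq_abs]

theorem stmt9_general {Ω : Type*} [MeasurableSpace Ω] (μ : Measure Ω)
    {d : ℕ} {p : Fin d → ℕ}
    (X X' : (i : Fin d) → Ω → EuclideanSpace ℝ (Fin (p i)))
    (a : (i : Fin d) → EuclideanSpace ℝ (Fin (p i))) (c' : Fin d → ℝ)
    (hc' : ∀ i, c' i ≠ 0)
    (A : (i : Fin d) → EuclideanSpace ℝ (Fin (p i)) ≃ₗᵢ[ℝ] EuclideanSpace ℝ (Fin (p i)))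
    (c : ℝ) :
    JdCov2Scale μ (fun i ω => a i + c' i • (A i) (X i ω))
        (fun i ω => a i + c' i • (A i) (X' i ω)) c = JdCov2Scale μ X X' c :=
  JdCov2Scale_comp_of_norm_sub μ X X' (fun i x => a i + c' i • A i x) (fun i => |c' i|)
    (fun i => norm_add_smul_map_sub (a i) (c' i) (A i)) (fun i => abs_pos.mpr (hc' i)) c

/-- Proposition 3(2). `JdCov_S²` is invariant under translations, nonzero
scalings and orthogonal transformations of the components. -/
theorem stmt9 {Ω : Type*} [MeasurableSpace Ω] (μ : Measure Ω) [IsProbabilityMeasure μ]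
    {d : ℕ} (hd : 2 ≤ d) {p : Fin d → ℕ}
    (X X' : (i : Fin d) → Ω → EuclideanSpace ℝ (Fin (p i)))
    (hm : ∀ i, Measurable (X i)) (hint : ∀ i, Integrable (X i) μ)
    (hA : Assumption1 μ X) (hcopy : IsIndepCopy μ X X')
    (hvar : ∀ i, 0 < dVar μ (X i) (X' i))
    (a : (i : Fin d) → EuclideanSpace ℝ (Fin (p i))) (c' : Fin d → ℝ)
    (hc' : ∀ i, c' i ≠ 0)
    (A : (i : Fin d) → EuclideanSpace ℝ (Fin (p i)) ≃ₗᵢ[ℝ] EuclideanSpace ℝ (Fin (p i)))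
    (c : ℝ) (hc : 0 ≤ c) :
    JdCov2Scale μ (fun i ω => a i + c' i • (A i) (X i ω))
        (fun i ω => a i + c' i • (A i) (X' i ω)) c = JdCov2Scale μ X X' c :=
  stmt9_general μ X X' a c' hc' A c
end
end

section
/- For any n ≥ 1, d ≥ 2, any points X_{ji} ∈ ℝ^{p_i} (1 ≤ j ≤ n, 1 ≤ i ≤ d), and any c ≥ 0: n^{-2} Σ_{k,l=1}^n ∏_{i=1}^d (Û_i(k,l) + c) − c^d = Σ_{S ⊆ {1,…,d}, |S| ≥ 2} c^{d−|S|} ( n^{-2} Σ_{k,l=1}^n ∏_{i∈S} Û_i(k,l) ); that is, the V-statistic estimator of the squared joint distance covariance decomposes into the weighted sum of the V-statistic estimators of the squared distance covariances of all subcollections of size at least 2. -/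
open MeasureTheory ProbabilityTheory Filter Finset
open scoped BigOperators RealInnerProductSpace Classical

noncomputable section

/-- the sample quantity `Û_i(k,l)` built from `n` points in each coordinate space. -/
def Uhat {n d : ℕ} {E : Fin d → Type*} [∀ i, NormedAddCommGroup (E i)]
    (X : (i : Fin d) → Fin n → E i) (i : Fin d) (k l : Fin n) : ℝ :=
  (n : ℝ)⁻¹ * ∑ v, ‖X i k - X i v‖ + (n : ℝ)⁻¹ * ∑ u, ‖X i u - X i l‖
    - ‖X i k - X i l‖ - ((n : ℝ) ^ 2)⁻¹ * ∑ u, ∑ v, ‖X i u - X i v‖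

/-! Expanding `∏ i, (Û_i(k,l) + c)` gives `∑_S c^{d-|S|} ∏_{i ∈ S} Û_i(k,l)`. Each `Û_i`
is double centred, so its sum over all `(k,l)` vanishes: after averaging, the singleton terms
drop out and the empty set contributes exactly `c^d`. -/

theorem Finset.prod_add_const_eq_sum_powerset {ι R : Type*} [Fintype ι] [CommSemiring R]
    (f : ι → R) (c : R) :
    ∏ i, (f i + c) = ∑ S : Finset ι, c ^ (Fintype.card ι - #S) * ∏ i ∈ S, f i := by
  rw [prod_add, powerset_univ]
  refine sum_congr rfl fun S _ => ?_
  rw [prod_const, card_univ_sdiff, mul_comm]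

theorem Finset.sum_prod_add_const_of_sum_eq_zero {ι κ R : Type*} [Fintype ι] [CommSemiring R]
    (s : Finset κ) (f : ι → κ → R) (c : R) (hf : ∀ i, ∑ k ∈ s, f i k = 0) :
    ∑ k ∈ s, ∏ i, (f i k + c) = #s • c ^ Fintype.card ι +
      ∑ S with 2 ≤ #S, c ^ (Fintype.card ι - #S) * ∑ k ∈ s, ∏ i ∈ S, f i k := by
  simp_rw [prod_add_const_eq_sum_powerset, mul_sum]
  rw [sum_comm, ← sum_filter_not_add_sum_filter _ (fun S => 2 ≤ #S)]
  congr 1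
  rw [sum_eq_single_of_mem ∅ (by simp)]
  · simp
  intro S hS hS_ne
  obtain ⟨i, rfl⟩ : ∃ i, S = {i} := card_eq_one.mp <| by
    have := card_pos.mpr (nonempty_iff_ne_empty.mpr hS_ne)
    simp only [mem_filter] at hS
    omega
  simp [← mul_sum, hf]

theorem sum_sum_Uhat_eq_zero {n d : ℕ} {E : Fin d → Type*} [∀ i, NormedAddCommGroup (E i)]
    (X : (i : Fin d) → Fin n → E i) (i : Fin d) :
    ∑ k, ∑ l, Uhat X i k l = 0 := by
  rcases n.eq_zero_or_pos with rfl | hn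
  · simp
  simp only [Uhat, sum_sub_distrib, sum_add_distrib, sum_const, card_univ, Fintype.card_fin,
    nsmul_eq_mul, ← mul_sum]
  rw [sum_comm (f := fun k l => ‖X i k - X i l‖)]
  field_simp
  ring

theorem stmt11_general {n d : ℕ} (hn : 1 ≤ n) {p : Fin d → ℕ}
    (X : (i : Fin d) → Fin n → EuclideanSpace ℝ (Fin (p i))) (c : ℝ) :
    ((n : ℝ) ^ 2)⁻¹ * (∑ k : Fin n, ∑ l : Fin n, ∏ i, (Uhat X i k l + c)) - c ^ d
      = ∑ S ∈ Finset.univ.filter (fun S : Finset (Fin d) => 2 ≤ S.card),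
          c ^ (d - S.card) *
            (((n : ℝ) ^ 2)⁻¹ * ∑ k : Fin n, ∑ l : Fin n, ∏ i ∈ S, Uhat X i k l) := by
  have expand := sum_prod_add_const_of_sum_eq_zero univ (fun i (kl : Fin n × Fin n) ↦
    Uhat X i kl.1 kl.2) c fun i ↦ by rw [← sum_sum_Uhat_eq_zero X i, Fintype.sum_prod_type']
  simp only [Fintype.sum_prod_type, card_univ, Fintype.card_prod, Fintype.card_fin,
    nsmul_eq_mul] at expand
  rw [expand, Nat.cast_mul, ← sq, mul_add, inv_mul_cancel_left₀ (by positivity),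
    add_sub_cancel_left, mul_sum]
  exact sum_congr rfl fun S _ ↦ mul_left_comm _ _ _

/-- The V-statistic estimator of `JdCov²` decomposes into the weighted sum
of the V-statistic estimators of the squared distance covariances of all subcollections of
size at least 2. -/
theorem stmt11 {n d : ℕ} (hn : 1 ≤ n) (hd : 2 ≤ d) {p : Fin d → ℕ}
    (X : (i : Fin d) → Fin n → EuclideanSpace ℝ (Fin (p i))) (c : ℝ) (hc : 0 ≤ c) :
    ((n : ℝ) ^ 2)⁻¹ * (∑ k : Fin n, ∑ l : Fin n, ∏ i, (Uhat X i k l + c)) - c ^ d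
      = ∑ S ∈ Finset.univ.filter (fun S : Finset (Fin d) => 2 ≤ S.card),
          c ^ (d - S.card) *
            (((n : ℝ) ^ 2)⁻¹ * ∑ k : Fin n, ∑ l : Fin n, ∏ i ∈ S, Uhat X i k l) :=
  stmt11_general hn X c
end
end

section
/- Let X_1,…,X_d (d ≥ 2, X_i ∈ ℝ^{p_i}) satisfy E|X_i| < ∞, let (X_1',…,X_d') be an independent copy of (X_1,…,X_d), and suppose E[|U_{X_i}(X_i,X_i')|^d] < ∞ for each i. Then dCov²(X_1,…,X_d) ≤ ∏_{i=1}^d ( E[|U_{X_i}(X_i,X_i')|^d] )^{1/d}. In particular, when d is even, dCov²(X_1,…,X_d) ≤ ∏_{i=1}^d ( E[U_{X_i}(X_i,X_i')^d] )^{1/d}, where E[U_{X_i}(X_i,X_i')^d] is the d-th order squared distance covariance of d copies of X_i. -/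
open MeasureTheory ProbabilityTheory Filter Finset
open scoped BigOperators RealInnerProductSpace Classical

noncomputable section

section Holder

variable {α ι : Type*} [MeasurableSpace α] {μ : Measure α}

open scoped ENNReal

theorem lintegral_enorm_pow_eq_ofReal_integral_abs_pow {f : α → ℝ} {n : ℕ}
    (hf : Integrable (fun a => |f a| ^ n) μ) :
    ∫⁻ a, ‖f a‖ₑ ^ n ∂μ = ENNReal.ofReal (∫ a, |f a| ^ n ∂μ) := by
  simpa [enorm_pow] using (ofReal_integral_norm_eq_lintegral_enorm hf).symm

theorem norm_integral_prod_le_prod_integral_abs_pow_card [Fintype ι] [Nonempty ι]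
    {f : ι → α → ℝ} (hf : ∀ i, Integrable (fun a => |f i a| ^ Fintype.card ι) μ) :
    ‖∫ a, ∏ i, f i a ∂μ‖
      ≤ ∏ i, (∫ a, |f i a| ^ Fintype.card ι ∂μ) ^ ((Fintype.card ι : ℝ)⁻¹) := by
  set n := Fintype.card ι
  have hn : (n : ℝ) ≠ 0 := by simp [n]
  have hmeas : ∀ i, AEMeasurable (fun a => ‖f i a‖ₑ ^ n) μ := fun i =>
    (hf i).aemeasurable.enorm.congr (.of_forall fun a => by simp [enorm_pow])
  have hholder : ∫⁻ a, ∏ i, ‖f i a‖ₑ ∂μ ≤ ∏ i, (∫⁻ a, ‖f i a‖ₑ ^ n ∂μ) ^ (n : ℝ)⁻¹ := by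
    have hroot : ∀ x : ℝ≥0∞, (x ^ n) ^ (n : ℝ)⁻¹ = x := fun x => by
      rw [← ENNReal.rpow_natCast, ← ENNReal.rpow_mul, mul_inv_cancel₀ hn, ENNReal.rpow_one]
    simpa only [hroot] using ENNReal.lintegral_prod_norm_pow_le (p := fun _ => (n : ℝ)⁻¹) _
      (fun i _ => hmeas i) (by simp [n, hn]) (fun _ _ => by positivity)
  -- `‖∫ g‖ ≤ (∫⁻ ‖g‖ₑ).toReal` holds for every `g`, so the product needs no measurability.
  refine (norm_integral_le_lintegral_norm _).trans
    (ENNReal.toReal_le_of_le_ofReal (by positivity) ?_)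
  calc ∫⁻ a, ENNReal.ofReal ‖∏ i, f i a‖ ∂μ = ∫⁻ a, ∏ i, ‖f i a‖ₑ ∂μ := by
        simp only [ofReal_norm, enorm_eq_nnnorm, nnnorm_prod, ENNReal.ofNNReal_finsetProd]
    _ ≤ ∏ i, (∫⁻ a, ‖f i a‖ₑ ^ n ∂μ) ^ (n : ℝ)⁻¹ := hholder
    _ = ENNReal.ofReal (∏ i, (∫ a, |f i a| ^ n ∂μ) ^ (n : ℝ)⁻¹) := by
        rw [ENNReal.ofReal_prod_of_nonneg fun i _ => by positivity]
        refine Finset.prod_congr rfl fun i _ => ?_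
        rw [lintegral_enorm_pow_eq_ofReal_integral_abs_pow (hf i),
          ENNReal.ofReal_rpow_of_nonneg (by positivity) (by positivity)]

end Holder

theorem stmt17_general {Ω : Type*} [MeasurableSpace Ω] (μ : Measure Ω)
    {d : ℕ} (hd : 2 ≤ d) {p : Fin d → ℕ}
    (X X' : (i : Fin d) → Ω → EuclideanSpace ℝ (Fin (p i)))
    (hmom : ∀ i, Integrable (fun ω => |Ufn μ (X i) (X' i) (X i ω) (X' i ω)| ^ d) μ) :
    dCov2 μ X X'
        ≤ (∏ i, (∫ ω, |Ufn μ (X i) (X' i) (X i ω) (X' i ω)| ^ d ∂μ) ^ ((d : ℝ)⁻¹)) ∧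
    (Even d → dCov2 μ X X'
        ≤ ∏ i, (∫ ω, (Ufn μ (X i) (X' i) (X i ω) (X' i ω)) ^ d ∂μ) ^ ((d : ℝ)⁻¹)) := by
  have : Nonempty (Fin d) := ⟨⟨0, by omega⟩⟩
  have holder : dCov2 μ X X'
      ≤ ∏ i, (∫ ω, |Ufn μ (X i) (X' i) (X i ω) (X' i ω)| ^ d ∂μ) ^ ((d : ℝ)⁻¹) := by
    refine (le_abs_self _).trans ?_
    simpa [dCov2, dCov2sub] using norm_integral_prod_le_prod_integral_abs_pow_card (μ := μ)
      (f := fun i ω => Ufn μ (X i) (X' i) (X i ω) (X' i ω)) (by simpa using hmom)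
  refine ⟨holder, fun hd_even => ?_⟩
  simpa only [hd_even.pow_abs] using holder

/-- Proposition 0.1(2). Hölder-type upper bound for `dCov²`. -/
theorem stmt17 {Ω : Type*} [MeasurableSpace Ω] (μ : Measure Ω) [IsProbabilityMeasure μ]
    {d : ℕ} (hd : 2 ≤ d) {p : Fin d → ℕ}
    (X X' : (i : Fin d) → Ω → EuclideanSpace ℝ (Fin (p i)))
    (hm : ∀ i, Measurable (X i)) (hint : ∀ i, Integrable (X i) μ)
    (hcopy : IsIndepCopy μ X X')
    (hmom : ∀ i, Integrable (fun ω => |Ufn μ (X i) (X' i) (X i ω) (X' i ω)| ^ d) μ) :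
    dCov2 μ X X'
        ≤ (∏ i, (∫ ω, |Ufn μ (X i) (X' i) (X i ω) (X' i ω)| ^ d ∂μ) ^ ((d : ℝ)⁻¹)) ∧
    (Even d → dCov2 μ X X'
        ≤ ∏ i, (∫ ω, (Ufn μ (X i) (X' i) (X i ω) (X' i ω)) ^ d ∂μ) ^ ((d : ℝ)⁻¹)) :=
  stmt17_general μ hd X X' hmom
end
end

section
/- Let (X^{(j)})_{j=1}^n be i.i.d. copies of a random vector (X_1,…,X_d) with X_i ∈ ℝ^{p_i}, where X_1,…,X_d are mutually independent. Let f_i(t) = E[exp(i⟨t,X_i⟩)] be the characteristic function of X_i and f̂_i(t) = n^{-1}Σ_{j=1}^n exp(i⟨t, X^{(j)}_i⟩) the empirical characteristic function. Define the empirical process Γ_n(t_1,…,t_d) = n^{-1/2} Σ_{j=1}^n ∏_{i=1}^d ( f̂_i(t_i) − exp(i⟨t_i, X^{(j)}_i⟩) ). Then for all t = (t_1,…,t_d) and t_0 = (t_{10},…,t_{d0}) with t_i, t_{i0} ∈ ℝ^{p_i}: E[Γ_n(t)] = 0 and E[Γ_n(t)·conj(Γ_n(t_0))] = c_n ∏_{i=1}^d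 ( f_i(t_i − t_{i0}) − f_i(t_i) f_i(−t_{i0}) ), where c_n = ((n−1)/n)^d + (n−1)(−1/n)^d and conj denotes complex conjugation. -/
open MeasureTheory ProbabilityTheory Filter Finset
open scoped BigOperators RealInnerProductSpace Classical

noncomputable section

/-- the empirical process `Γ_n(t)(ω) = n^{-1/2} Σ_j ∏ᵢ (f̂ᵢ(tᵢ)(ω) − e^{i⟪tᵢ, W_jᵢ(ω)⟫})`. -/
def Gamman {Ω : Type*} {d n : ℕ} {p : Fin d → ℕ}
    (W : Fin n → Ω → (i : Fin d) → EuclideanSpace ℝ (Fin (p i)))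
    (t : (i : Fin d) → EuclideanSpace ℝ (Fin (p i))) (ω : Ω) : ℂ :=
  ((Real.sqrt n : ℝ) : ℂ)⁻¹ * ∑ j : Fin n, ∏ i,
    ((n : ℂ)⁻¹ * ∑ j' : Fin n, Complex.exp (Complex.I * ((⟪t i, W j' ω i⟫ : ℝ) : ℂ))
      - Complex.exp (Complex.I * ((⟪t i, W j ω i⟫ : ℝ) : ℂ)))

/-!
Write `Γ_n(t) = n^{-1/2} Σ_j ∏_i D_{ij}` with `D_{ij} = Σ_r w_{jr} e^{i⟨t_i, X_i^{(r)}⟩}` and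
centering weights `w_{jr} = 1/n - δ_{jr}`, so that `D_{ij}` depends only on the `i`-th column
`(X_i^{(r)})_r` of the sample. Independence of the coordinates and of the copies makes the `d`
columns independent, so expectations of products over `i` factor. Each column is an i.i.d. sample
and `Σ_r w_{jr} = 0`, hence `E D_{ij} = 0` and
`E[D_{ij}(t) conj D_{ik}(t₀)] = (δ_{jk} - 1/n) (f_i(t_i - t_{i0}) - f_i(t_i) f_i(-t_{i0}))`.
Summing `(δ_{jk} - 1/n)^d` over `j, k` gives `n c_n`.
-/

lemma MemLp.prod_top {Ω ι 𝕜 : Type*} [MeasurableSpace Ω] [NormedCommRing 𝕜]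
    {μ : Measure Ω} {s : Finset ι} {f : ι → Ω → 𝕜} (hf : ∀ i ∈ s, MemLp (f i) ⊤ μ) :
    MemLp (fun ω ↦ ∏ i ∈ s, f i ω) ⊤ μ := by
  simpa using MemLp.prod' hf

namespace ProbabilityTheory

variable {Ω : Type*} [MeasurableSpace Ω] {μ : Measure Ω}

lemma iIndepFun.curry {ι : Type*} {κ : ι → Type*} {𝓧 : (i : ι) → κ i → Type*}
    [∀ i j, MeasurableSpace (𝓧 i j)] {X : (i : ι) → (j : κ i) → Ω → 𝓧 i j}
    (mX : ∀ i j, Measurable (X i j))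
    (h : iIndepFun (fun (p : (i : ι) × κ i) ω ↦ X p.1 p.2 ω) μ) :
    iIndepFun (fun i ω ↦ (X i · ω)) μ := by
  have := h.isProbabilityMeasure
  have hprob i j : IsProbabilityMeasure (μ.map (X i j)) :=
    Measure.isProbabilityMeasure_map (mX i j).aemeasurable
  have mrow i : Measurable fun ω j ↦ X i j ω := measurable_pi_lambda _ (mX i)
  have hrow i : μ.map (fun ω j ↦ X i j ω) = Measure.infinitePi fun j ↦ μ.map (X i j) :=
    (h.precomp sigma_mk_injective).map_fun_eq_infinitePi_map₀ (mrow i).aemeasurable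
  have hcurry : (fun ω i j ↦ X i j ω) =
      MeasurableEquiv.piCurry 𝓧 ∘ fun ω (p : (i : ι) × κ i) ↦ X p.1 p.2 ω := rfl
  have mflat : Measurable fun ω (p : (i : ι) × κ i) ↦ X p.1 p.2 ω :=
    measurable_pi_lambda _ fun p ↦ mX p.1 p.2
  rw [iIndepFun_iff_map_fun_eq_infinitePi_map₀ (measurable_pi_lambda _ mrow).aemeasurable, hcurry,
    ← Measure.map_map (MeasurableEquiv.measurable _) mflat,
    h.map_fun_eq_infinitePi_map₀ mflat.aemeasurable,
    Measure.infinitePi_map_piCurry (fun i j ↦ μ.map (X i j))]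
  simp_rw [hrow]

lemma iIndepFun.transpose {ι κ : Type*} {E : κ → Type*} [∀ k, MeasurableSpace (E k)]
    {W : ι → Ω → (k : κ) → E k} (hW : ∀ j, Measurable (W j)) (h : iIndepFun W μ)
    (hrow : ∀ j, iIndepFun (fun k ω ↦ W j ω k) μ) :
    iIndepFun (fun k ω j ↦ W j ω k) μ := by
  have mW : ∀ j k, Measurable fun ω ↦ W j ω k := fun j k ↦ (hW j).eval
  have hflat := (iIndepFun_uncurry mW h hrow).precomp
    (g := fun p : (_ : κ) × ι ↦ (⟨p.2, p.1⟩ : (_ : ι) × κ))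
    (fun p q hpq ↦ by cases p; cases q; simp_all [Sigma.mk.injEq])
  exact iIndepFun.curry (X := fun k j ω ↦ W j ω k) (fun k j ↦ mW j k) hflat

lemma IdentDistrib.iIndepFun_eval {Ω' ι : Type*} [MeasurableSpace Ω'] {μ' : Measure Ω'}
    [IsProbabilityMeasure μ'] {β : ι → Type*} [∀ i, MeasurableSpace (β i)]
    {X : (i : ι) → Ω → β i} {Y : Ω' → (i : ι) → β i}
    (hXY : IdentDistrib Y (fun ω i ↦ X i ω) μ' μ) (hX : iIndepFun X μ) :
    iIndepFun (fun i ω ↦ Y ω i) μ' := by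
  rw [iIndepFun_iff_map_fun_eq_infinitePi_map₀ hXY.aemeasurable_fst, hXY.map_eq,
    hX.map_fun_eq_infinitePi_map₀ hXY.aemeasurable_snd]
  congr with i : 1
  exact ((hXY.comp_of_aemeasurable (measurable_pi_apply i).aemeasurable).map_eq).symm

end ProbabilityTheory

open ComplexConjugate

def centeringWeight (n : ℕ) (j r : Fin n) : ℂ := (n : ℂ)⁻¹ - if r = j then 1 else 0

lemma inv_mul_sum_sub_eq_sum_centeringWeight {n : ℕ} (x : Fin n → ℂ) (j : Fin n) :
    (n : ℂ)⁻¹ * ∑ r, x r - x j = ∑ r, centeringWeight n j r * x r := by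
  simp [centeringWeight, sub_mul, Finset.sum_sub_distrib, Finset.mul_sum]

lemma sum_centeringWeight {n : ℕ} (j : Fin n) : ∑ r, centeringWeight n j r = 0 := by
  have : (n : ℂ) ≠ 0 := Nat.cast_ne_zero.2 j.pos.ne'
  simp [centeringWeight, Finset.sum_sub_distrib, this]

lemma sum_centeringWeight_mul_conj {n : ℕ} (j k : Fin n) :
    ∑ r, centeringWeight n j r * conj (centeringWeight n k r) =
      (if j = k then 1 else 0) - (n : ℂ)⁻¹ := by
  have : (n : ℂ) ≠ 0 := Nat.cast_ne_zero.2 j.pos.ne'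
  simp only [centeringWeight, map_sub, map_inv₀, map_natCast, apply_ite conj, map_one, map_zero]
  simp only [eq_comm, mul_sub, sub_mul, ite_mul, one_mul, zero_mul, mul_ite, mul_one, mul_zero,
    Finset.sum_sub_distrib, Finset.sum_const, Finset.card_univ, Fintype.card_fin, nsmul_eq_mul,
    Finset.sum_ite_eq, Finset.mem_univ, if_true]
  field_simp
  ring

lemma sum_sum_ite_eq {ι : Type*} [Fintype ι] [DecidableEq ι] (x y : ℂ) :
    ∑ j : ι, ∑ k : ι, (if j = k then x else y) =
      Fintype.card ι * (x + (Fintype.card ι - 1) * y) := by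
  have h j : ∑ k : ι, (if j = k then x else y) = ∑ k : ι, (y + if j = k then x - y else 0) :=
    Finset.sum_congr rfl fun k _ ↦ by split_ifs <;> ring
  simp only [h, Finset.sum_add_distrib, Finset.sum_ite_eq, Finset.mem_univ, if_true,
    Finset.sum_const, Finset.card_univ, nsmul_eq_mul]
  ring

lemma sum_sum_ite_sub_inv_pow (n d : ℕ) :
    ∑ j : Fin n, ∑ k : Fin n, ((if j = k then 1 else 0) - (n : ℂ)⁻¹) ^ d =
      n * ((1 - (n : ℂ)⁻¹) ^ d + (n - 1) * (-(n : ℂ)⁻¹) ^ d) := by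
  have h (j k : Fin n) : ((if j = k then 1 else 0) - (n : ℂ)⁻¹) ^ d =
      if j = k then (1 - (n : ℂ)⁻¹) ^ d else (-(n : ℂ)⁻¹) ^ d := by
    split_ifs <;> simp
  simp only [h]
  rw [sum_sum_ite_eq, Fintype.card_fin]

section IIDSample

variable {ι Ω Ω' α : Type*} [MeasurableSpace Ω] [MeasurableSpace Ω']
  [MeasurableSpace α] {μ : Measure Ω} {μ' : Measure Ω'} {Y : ι → Ω → α} {Z : Ω' → α}

lemma integral_sum_mul_comp [Fintype ι] (hY : ∀ r, IdentDistrib (Y r) Z μ μ') {f : α → ℂ}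
    (hf : Measurable f) (hfZ : Integrable (fun ω ↦ f (Z ω)) μ') (u : ι → ℂ) :
    ∫ ω, ∑ r, u r * f (Y r ω) ∂μ = (∑ r, u r) * ∫ ω, f (Z ω) ∂μ' := by
  have hfY r : IdentDistrib (fun ω ↦ f (Y r ω)) (fun ω ↦ f (Z ω)) μ μ' := (hY r).comp hf
  rw [integral_finsetSum _ fun r _ ↦ ((hfY r).integrable_iff.2 hfZ).const_mul _,
    Finset.sum_mul]
  simp_rw [integral_const_mul, (hfY _).integral_eq]

lemma integral_comp_mul_conj_comp (hind : iIndepFun Y μ) (hY : ∀ r, IdentDistrib (Y r) Z μ μ')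
    {a b : α → ℂ} (ha : Measurable a) (hb : Measurable b) (r s : ι) :
    ∫ ω, a (Y r ω) * conj (b (Y s ω)) ∂μ =
      if r = s then ∫ ω, a (Z ω) * conj (b (Z ω)) ∂μ'
      else (∫ ω, a (Z ω) ∂μ') * conj (∫ ω, b (Z ω) ∂μ') := by
  split_ifs with hrs
  · subst hrs
    exact ((hY r).comp (ha.mul (Complex.continuous_conj.measurable.comp hb))).integral_eq
  · rw [(hind.indepFun hrs).integral_fun_comp_mul_comp (g := fun x ↦ conj (b x))
      (hY r).aemeasurable_fst (hY s).aemeasurable_fst ha.aestronglyMeasurable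
      (Complex.continuous_conj.measurable.comp hb).aestronglyMeasurable, integral_conj]
    have hra : ∫ ω, a (Y r ω) ∂μ = ∫ ω, a (Z ω) ∂μ' := ((hY r).comp ha).integral_eq
    have hsb : ∫ ω, b (Y s ω) ∂μ = ∫ ω, b (Z ω) ∂μ' := ((hY s).comp hb).integral_eq
    rw [hra, hsb]

lemma integral_sum_mul_conj_sum [Fintype ι] (hind : iIndepFun Y μ)
    (hY : ∀ r, IdentDistrib (Y r) Z μ μ')
    {a b : α → ℂ} (ha : Measurable a) (hb : Measurable b)
    (haZ : MemLp (fun ω ↦ a (Z ω)) 2 μ') (hbZ : MemLp (fun ω ↦ b (Z ω)) 2 μ')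
    (u v : ι → ℂ) (hu : ∑ r, u r = 0) :
    ∫ ω, (∑ r, u r * a (Y r ω)) * conj (∑ s, v s * b (Y s ω)) ∂μ =
      (∑ r, u r * conj (v r)) *
        ((∫ ω, a (Z ω) * conj (b (Z ω)) ∂μ') -
          (∫ ω, a (Z ω) ∂μ') * conj (∫ ω, b (Z ω) ∂μ')) := by
  have hint r s : Integrable (fun ω ↦ a (Y r ω) * conj (b (Y s ω))) μ :=
    (((hY r).comp ha).memLp_iff.2 haZ).integrable_mul
      (((hY s).comp hb).memLp_iff.2 hbZ).star
  have hexpand ω : (∑ r, u r * a (Y r ω)) * conj (∑ s, v s * b (Y s ω)) =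
      ∑ r, ∑ s, u r * conj (v s) * (a (Y r ω) * conj (b (Y s ω))) := by
    simp only [map_sum, map_mul, Finset.sum_mul_sum]
    exact Finset.sum_congr rfl fun r _ ↦ Finset.sum_congr rfl fun s _ ↦ by ring
  simp_rw [hexpand]
  rw [integral_finsetSum _ fun r _ ↦ integrable_finsetSum _ fun s _ ↦ (hint r s).const_mul _]
  simp_rw [integral_finsetSum _ fun s _ ↦ (hint _ s).const_mul _, integral_const_mul,
    integral_comp_mul_conj_comp hind hY ha hb]
  set A := ∫ ω, a (Z ω) * conj (b (Z ω)) ∂μ'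
  set B := (∫ ω, a (Z ω) ∂μ') * conj (∫ ω, b (Z ω) ∂μ')
  -- off the diagonal every term has mean `B`, and these add up to `(∑ u) * (∑ conj v) * B = 0`
  have hsplit r s : u r * conj (v s) * (if r = s then A else B) =
      u r * conj (v s) * B + if r = s then u r * conj (v s) * (A - B) else 0 := by
    split_ifs <;> ring
  simp_rw [hsplit, Finset.sum_add_distrib]
  simp [Finset.sum_ite_eq, ← Finset.sum_mul, ← Finset.mul_sum, hu]

end IIDSample

def cexpInner {E : Type*} [Inner ℝ E] (s x : E) : ℂ := Complex.exp (Complex.I * ⟪s, x⟫)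

section cexpInner

variable {E : Type*} [NormedAddCommGroup E] [InnerProductSpace ℝ E]

lemma continuous_cexpInner (s : E) : Continuous (cexpInner s) := by
  unfold cexpInner; fun_prop

@[fun_prop]
lemma measurable_cexpInner [MeasurableSpace E] [OpensMeasurableSpace E] (s : E) :
    Measurable (cexpInner s) :=
  (continuous_cexpInner s).measurable

@[simp]
lemma norm_cexpInner (s x : E) : ‖cexpInner s x‖ = 1 := by
  simp [cexpInner, Complex.norm_exp]

lemma conj_cexpInner (s x : E) : conj (cexpInner s x) = cexpInner (-s) x := by
  simp [cexpInner, ← Complex.exp_conj, inner_neg_left]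

lemma cexpInner_mul_conj (s s' x : E) :
    cexpInner s x * conj (cexpInner s' x) = cexpInner (s - s') x := by
  rw [conj_cexpInner, cexpInner, cexpInner, cexpInner, ← Complex.exp_add, inner_sub_left,
    inner_neg_left]
  push_cast
  ring_nf

lemma memLp_top_cexpInner_comp {Ω : Type*} [MeasurableSpace Ω] [MeasurableSpace E]
    [OpensMeasurableSpace E] {μ : Measure Ω} (s : E) {Y : Ω → E} (hY : AEMeasurable Y μ) :
    MemLp (fun ω ↦ cexpInner s (Y ω)) ⊤ μ :=
  memLp_top_of_bound ((measurable_cexpInner s).comp_aemeasurable hY).aestronglyMeasurable 1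
    (ae_of_all _ fun _ ↦ (norm_cexpInner s _).le)

end cexpInner

/-- `f̂(s) - e^{i⟨s, y_j⟩}`, with `f̂` the empirical characteristic function of the sample `y`. -/
def centeredEmpChar {E : Type*} [Inner ℝ E] (n : ℕ) (j : Fin n) (s : E) (y : Fin n → E) :
    ℂ :=
  ∑ r, centeringWeight n j r * cexpInner s (y r)

section CenteredEmpChar

variable {E : Type*} [NormedAddCommGroup E] [InnerProductSpace ℝ E] [MeasurableSpace E]
  [OpensMeasurableSpace E] {n : ℕ}

@[fun_prop]
lemma measurable_centeredEmpChar (j : Fin n) (s : E) : Measurable (centeredEmpChar n j s) := by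
  unfold centeredEmpChar; fun_prop

lemma memLp_top_centeredEmpChar_comp {Ω : Type*} [MeasurableSpace Ω] {μ : Measure Ω}
    {Y : Fin n → Ω → E} (hY : ∀ r, AEMeasurable (Y r) μ) (j : Fin n) (s : E) :
    MemLp (fun ω ↦ centeredEmpChar n j s (Y · ω)) ⊤ μ :=
  memLp_finsetSum _ fun r _ ↦ (memLp_top_cexpInner_comp s (hY r)).const_mul _

variable {Ω Ω' : Type*} [MeasurableSpace Ω] [MeasurableSpace Ω'] {μ : Measure Ω}
  {μ' : Measure Ω'} [IsProbabilityMeasure μ'] {Y : Fin n → Ω → E} {Z : Ω' → E}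

lemma integral_centeredEmpChar (hY : ∀ r, IdentDistrib (Y r) Z μ μ') (j : Fin n) (s : E) :
    ∫ ω, centeredEmpChar n j s (Y · ω) ∂μ = 0 := by
  unfold centeredEmpChar
  rw [integral_sum_mul_comp hY (measurable_cexpInner s)
    ((memLp_top_cexpInner_comp s (hY j).aemeasurable_snd).integrable le_top),
    sum_centeringWeight, zero_mul]

lemma integral_centeredEmpChar_mul_conj (hind : iIndepFun Y μ)
    (hY : ∀ r, IdentDistrib (Y r) Z μ μ') (j k : Fin n) (s s' : E) :
    ∫ ω, centeredEmpChar n j s (Y · ω) * conj (centeredEmpChar n k s' (Y · ω)) ∂μ =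
      ((if j = k then 1 else 0) - (n : ℂ)⁻¹) *
        ((∫ ω, cexpInner (s - s') (Z ω) ∂μ') -
          (∫ ω, cexpInner s (Z ω) ∂μ') * ∫ ω, cexpInner (-s') (Z ω) ∂μ') := by
  have hmemLp (s : E) := (memLp_top_cexpInner_comp s (hY j).aemeasurable_snd).mono_exponent
    (p := 2) le_top
  unfold centeredEmpChar
  rw [integral_sum_mul_conj_sum hind hY (measurable_cexpInner s)
    (measurable_cexpInner s') (hmemLp s) (hmemLp s') _ _ (sum_centeringWeight j),
    sum_centeringWeight_mul_conj, ← integral_conj]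
  simp_rw [cexpInner_mul_conj, conj_cexpInner]

end CenteredEmpChar

section EmpiricalProcess

variable {Ω : Type*} {d n : ℕ} {p : Fin d → ℕ}
  {W : Fin n → Ω → (i : Fin d) → EuclideanSpace ℝ (Fin (p i))}

lemma Gamman_eq_sum_prod (t : (i : Fin d) → EuclideanSpace ℝ (Fin (p i))) (ω : Ω) :
    Gamman W t ω = ((Real.sqrt n : ℝ) : ℂ)⁻¹ *
      ∑ j, ∏ i, centeredEmpChar n j (t i) (W · ω i) := by
  simp only [Gamman, centeredEmpChar, ← inv_mul_sum_sub_eq_sum_centeringWeight]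
  rfl

lemma Gamman_mul_conj_eq (t t₀ : (i : Fin d) → EuclideanSpace ℝ (Fin (p i))) (ω : Ω) :
    Gamman W t ω * conj (Gamman W t₀ ω) = (n : ℂ)⁻¹ * ∑ j, ∑ k, ∏ i,
      centeredEmpChar n j (t i) (W · ω i) * conj (centeredEmpChar n k (t₀ i) (W · ω i)) := by
  rw [Gamman_eq_sum_prod, Gamman_eq_sum_prod, map_mul, map_inv₀, Complex.conj_ofReal, map_sum,
    mul_mul_mul_comm, ← mul_inv, ← Complex.ofReal_mul, Real.mul_self_sqrt (Nat.cast_nonneg n),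
    Complex.ofReal_natCast, Finset.sum_mul_sum]
  simp only [map_prod, Finset.prod_mul_distrib]

variable [MeasurableSpace Ω] {μ : Measure Ω} [IsProbabilityMeasure μ]
  {X : (i : Fin d) → Ω → EuclideanSpace ℝ (Fin (p i))}

lemma integral_Gamman_eq_zero (hd : 0 < d) (hcol : iIndepFun (fun i ω j ↦ W j ω i) μ)
    (hlaw : ∀ i j, IdentDistrib (fun ω ↦ W j ω i) (X i) μ μ)
    (t : (i : Fin d) → EuclideanSpace ℝ (Fin (p i))) :
    ∫ ω, Gamman W t ω ∂μ = 0 := by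
  have hint j : Integrable (fun ω ↦ ∏ i, centeredEmpChar n j (t i) (W · ω i)) μ :=
    (MemLp.prod_top fun i _ ↦ memLp_top_centeredEmpChar_comp
      (fun r ↦ (hlaw i r).aemeasurable_fst) j (t i)).integrable le_top
  have hprod j : ∫ ω, ∏ i, centeredEmpChar n j (t i) (W · ω i) ∂μ =
      ∏ i, ∫ ω, centeredEmpChar n j (t i) (W · ω i) ∂μ :=
    hcol.integral_fun_prod_comp
      (fun i ↦ aemeasurable_pi_lambda _ fun r ↦ (hlaw i r).aemeasurable_fst)
      (fun i ↦ (measurable_centeredEmpChar j (t i)).aestronglyMeasurable)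
  simp_rw [Gamman_eq_sum_prod, integral_const_mul, integral_finsetSum _ fun j _ ↦ hint j, hprod]
  exact mul_eq_zero_of_right _ (Finset.sum_eq_zero fun j _ ↦ Finset.prod_eq_zero
    (Finset.mem_univ ⟨0, hd⟩) (integral_centeredEmpChar (hlaw _) j _))

lemma integral_Gamman_mul_conj (hn : 0 < n) (hcol : iIndepFun (fun i ω j ↦ W j ω i) μ)
    (hsample : ∀ i, iIndepFun (fun j ω ↦ W j ω i) μ)
    (hlaw : ∀ i j, IdentDistrib (fun ω ↦ W j ω i) (X i) μ μ)
    (t t₀ : (i : Fin d) → EuclideanSpace ℝ (Fin (p i))) :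
    ∫ ω, Gamman W t ω * conj (Gamman W t₀ ω) ∂μ =
      ((((n : ℂ) - 1) / n) ^ d + ((n : ℂ) - 1) * (-(1 / (n : ℂ))) ^ d) * ∏ i,
        (charFn μ (X i) (t i - t₀ i) - charFn μ (X i) (t i) * charFn μ (X i) (-(t₀ i))) := by
  have hmemLp i j s := memLp_top_centeredEmpChar_comp (fun r ↦ (hlaw i r).aemeasurable_fst) j s
  have hint j k : Integrable (fun ω ↦ ∏ i, centeredEmpChar n j (t i) (W · ω i) *
      conj (centeredEmpChar n k (t₀ i) (W · ω i))) μ :=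
    (MemLp.prod_top fun i _ ↦ (hmemLp i k (t₀ i)).star.mul (hmemLp i j (t i))).integrable le_top
  have hprod j k : ∫ ω, ∏ i, centeredEmpChar n j (t i) (W · ω i) *
      conj (centeredEmpChar n k (t₀ i) (W · ω i)) ∂μ =
      ∏ i, ∫ ω, centeredEmpChar n j (t i) (W · ω i) *
        conj (centeredEmpChar n k (t₀ i) (W · ω i)) ∂μ :=
    hcol.integral_fun_prod_comp
      (f := fun i y ↦ centeredEmpChar n j (t i) y * conj (centeredEmpChar n k (t₀ i) y))
      (fun i ↦ aemeasurable_pi_lambda _ fun r ↦ (hlaw i r).aemeasurable_fst)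
      (fun i ↦ Measurable.aestronglyMeasurable (by fun_prop))
  have hfactor i j k : ∫ ω, centeredEmpChar n j (t i) (W · ω i) *
      conj (centeredEmpChar n k (t₀ i) (W · ω i)) ∂μ =
      ((if j = k then 1 else 0) - (n : ℂ)⁻¹) *
        (charFn μ (X i) (t i - t₀ i) - charFn μ (X i) (t i) * charFn μ (X i) (-(t₀ i))) :=
    integral_centeredEmpChar_mul_conj (hsample i) (hlaw i) j k (t i) (t₀ i)
  simp_rw [Gamman_mul_conj_eq, integral_const_mul,
    integral_finsetSum _ fun j _ ↦ integrable_finsetSum _ fun k _ ↦ hint j k,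
    integral_finsetSum _ fun k _ ↦ hint _ k, hprod, hfactor, Finset.prod_mul_distrib,
    Finset.prod_const, Finset.card_univ, Fintype.card_fin, ← Finset.sum_mul]
  rw [sum_sum_ite_sub_inv_pow]
  have : (n : ℂ) ≠ 0 := Nat.cast_ne_zero.2 hn.ne'
  field_simp

end EmpiricalProcess

theorem stmt19_general {Ω : Type*} [MeasurableSpace Ω] (μ : Measure Ω) [IsProbabilityMeasure μ]
    {d n : ℕ} (hd : 2 ≤ d) (hn : 1 ≤ n) {p : Fin d → ℕ}
    (X : (i : Fin d) → Ω → EuclideanSpace ℝ (Fin (p i)))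
    (hindep : iIndepFun X μ)
    (W : Fin n → Ω → (i : Fin d) → EuclideanSpace ℝ (Fin (p i)))
    (hmW : ∀ j, Measurable (W j))
    (hiid : iIndepFun W μ)
    (hidW : ∀ j, IdentDistrib (W j) (fun ω i => X i ω) μ μ)
    (t t₀ : (i : Fin d) → EuclideanSpace ℝ (Fin (p i))) :
    (∫ ω, Gamman W t ω ∂μ) = 0 ∧
    (∫ ω, Gamman W t ω * (starRingEnd ℂ) (Gamman W t₀ ω) ∂μ)
      = (((((n : ℝ) - 1) / n) ^ d + ((n : ℝ) - 1) * (-(1 / (n : ℝ))) ^ d : ℝ) : ℂ) *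
          ∏ i, (charFn μ (X i) (t i - t₀ i) - charFn μ (X i) (t i) * charFn μ (X i) (-(t₀ i))) := by
  have hlaw i j : IdentDistrib (fun ω ↦ W j ω i) (X i) μ μ :=
    (hidW j).comp (measurable_pi_apply i)
  have hsample i : iIndepFun (fun j ω ↦ W j ω i) μ :=
    hiid.comp _ fun _ ↦ measurable_pi_apply i
  have hcol : iIndepFun (fun i ω j ↦ W j ω i) μ :=
    hiid.transpose hmW fun j ↦ (hidW j).iIndepFun_eval hindep
  refine ⟨integral_Gamman_eq_zero (by omega) hcol hlaw t, ?_⟩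
  rw [integral_Gamman_mul_conj (by omega) hcol hsample hlaw]
  push_cast
  rfl

/-- Mean zero and the covariance structure of the empirical process `Γ_n`
under mutual independence. -/
theorem stmt19 {Ω : Type*} [MeasurableSpace Ω] (μ : Measure Ω) [IsProbabilityMeasure μ]
    {d n : ℕ} (hd : 2 ≤ d) (hn : 1 ≤ n) {p : Fin d → ℕ}
    (X : (i : Fin d) → Ω → EuclideanSpace ℝ (Fin (p i)))
    (hm : ∀ i, Measurable (X i))
    (hindep : iIndepFun X μ)
    (W : Fin n → Ω → (i : Fin d) → EuclideanSpace ℝ (Fin (p i)))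
    (hmW : ∀ j, Measurable (W j))
    (hiid : iIndepFun W μ)
    (hidW : ∀ j, IdentDistrib (W j) (fun ω i => X i ω) μ μ)
    (t t₀ : (i : Fin d) → EuclideanSpace ℝ (Fin (p i))) :
    (∫ ω, Gamman W t ω ∂μ) = 0 ∧
    (∫ ω, Gamman W t ω * (starRingEnd ℂ) (Gamman W t₀ ω) ∂μ)
      = (((((n : ℝ) - 1) / n) ^ d + ((n : ℝ) - 1) * (-(1 / (n : ℝ))) ^ d : ℝ) : ℂ) *
          ∏ i, (charFn μ (X i) (t i - t₀ i) - charFn μ (X i) (t i) * charFn μ (X i) (-(t₀ i))) :=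
  stmt19_general μ hd hn X hindep W hmW hiid hidW t t₀
end
end
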